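/- arXiv:2405.00889 — 4 statements merged into one kernel-verified Lean document; each statement's English description precedes it below -/
import Mathlib

section
/- Let (I, E) be a monomial for A//E(n) of odd degree and let w = w(I,E) be its weight. Then its topological degree satisfies −w + 1 ≤ deg(I,E), and p·deg(I,E) ≤ −(p−1)·w + p·(1 − 2p^n) (equivalently, deg(I,E) ≤ −((p−1)/p)·w + 1 − 2p^n). -/
/-- A monomial for `𝒜 ⫽ E(n)` at the prime `p`: a pair `(I, E)` of finitely
supported functions, `I` indexed by `{1, 2, 3, …}` (encoded by `I 0 = 0`),
`E` taking values in `{0, 1}` and vanishing on `{0, …, n}`. -/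
structure Mon (p n : ℕ) : Type where
  I : ℕ →₀ ℕ
  E : ℕ →₀ ℕ
  hI0 : I 0 = 0
  hE1 : ∀ j, E j ≤ 1
  hEn : ∀ j, j ≤ n → E j = 0

namespace Mon

variable {p n : ℕ}

/-- The topological degree `deg(I,E) = −Σ_{j≥1} (2p^j − 2)·I j − Σ_{j≥0} (2p^j − 1)·E j`. -/
def deg (m : Mon p n) : ℤ :=
  -(m.I.sum fun j a => (2 * (p : ℤ) ^ j - 2) * a)
    - m.E.sum fun j a => (2 * (p : ℤ) ^ j - 1) * a

/-- The weight `w(I,E) = Σ_{j≥1} 2p^j·I j + Σ_{j≥0} 2p^j·E j`. -/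
def wt (m : Mon p n) : ℕ :=
  (m.I.sum fun j a => 2 * p ^ j * a) + m.E.sum fun j a => 2 * p ^ j * a

/-- The `ℓ`-mixed weight `mw_ℓ(I,E) = Σ_{1≤j<ℓ} 2p^j·I j + 2p^ℓ·Σ_{j≥ℓ} I j`. -/
def mw (ℓ : ℕ) (m : Mon p n) : ℕ :=
  m.I.sum fun j a => if j < ℓ then 2 * p ^ j * a else 2 * p ^ ℓ * a

end Mon

/-!
Writing `|I| = Σ I j` and `|E| = Σ E j`, the degree is `deg = -w + 2|I| + |E|`, and the weight is
even, so odd degree forces `|E|` odd, in particular `|E| ≥ 1`; this gives the lower bound.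
For the upper bound, `I` lives in indices `≥ 1` and `E` in indices `≥ n + 1`, so
`w ≥ 2p|I| + 2p^(n+1)|E|`, whence `-w + 2p|I| + p|E| ≤ |E|(p - 2p^(n+1)) ≤ p - 2p^(n+1)` because `p - 2p^(n+1) ≤ 0`.
-/

theorem Finsupp.mul_degree_le_sum_mul {ι : Type*} (f : ι →₀ ℕ) (g : ι → ℕ) (c : ℕ)
    (h : ∀ i ∈ f.support, c ≤ g i) :
    c * f.degree ≤ f.sum fun i a => g i * a := by
  rw [Finsupp.degree_apply, Finset.mul_sum]
  exact Finset.sum_le_sum fun i hi => Nat.mul_le_mul_right _ (h i hi)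

namespace Mon

variable {p n : ℕ}

theorem deg_eq_neg_wt_add (m : Mon p n) :
    m.deg = -(m.wt : ℤ) + 2 * m.I.degree + m.E.degree := by
  simp only [deg, wt, Finsupp.sum, Finsupp.degree_apply, sub_mul, one_mul, Finset.sum_sub_distrib]
  push_cast [Finset.mul_sum]
  ring

theorem even_wt (m : Mon p n) : Even m.wt := by
  simp only [wt, Finsupp.sum, even_iff_two_dvd, mul_assoc]
  exact dvd_add (Finset.dvd_sum fun _ _ => dvd_mul_right _ _)
    (Finset.dvd_sum fun _ _ => dvd_mul_right _ _)

theorem odd_degree_E_of_odd_deg {m : Mon p n} (hodd : Odd m.deg) : Odd m.E.degree := by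
  have hE : (m.E.degree : ℤ) = m.deg + m.wt - 2 * m.I.degree := by
    rw [deg_eq_neg_wt_add]; ring
  rw [← Int.odd_coe_nat, hE]
  exact (hodd.add_even ((Int.even_coe_nat _).mpr m.even_wt)).sub_even (even_two_mul _)

theorem two_mul_degree_add_le_wt (m : Mon p n) :
    2 * p * m.I.degree + 2 * p ^ (n + 1) * m.E.degree ≤ m.wt := by
  refine add_le_add (Finsupp.mul_degree_le_sum_mul _ _ _ fun j hj => ?_)
    (Finsupp.mul_degree_le_sum_mul _ _ _ fun j hj => ?_)
  · have hj0 : j ≠ 0 := by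
      rintro rfl
      exact Finsupp.mem_support_iff.mp hj m.hI0
    exact Nat.mul_le_mul_left 2 (Nat.le_self_pow hj0 p)
  · have hnj : n + 1 ≤ j := by
      by_contra! hjn
      exact Finsupp.mem_support_iff.mp hj (m.hEn j (by omega))
    rcases Nat.eq_zero_or_pos p with rfl | hp
    · simp
    · exact Nat.mul_le_mul_left 2 (Nat.pow_le_pow_right hp hnj)

end Mon

theorem degree_bounds_of_odd_general (p n : ℕ) (m : Mon p n)
    (hodd : Odd m.deg) :
    -(m.wt : ℤ) + 1 ≤ m.deg ∧
      (p : ℤ) * m.deg ≤ -((p : ℤ) - 1) * m.wt + p * (1 - 2 * (p : ℤ) ^ n) := by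
  have hE : (1 : ℤ) ≤ m.E.degree := by exact_mod_cast (Mon.odd_degree_E_of_odd_deg hodd).pos
  have hwt : 2 * (p : ℤ) * m.I.degree + 2 * (p : ℤ) ^ (n + 1) * m.E.degree ≤ m.wt := by
    exact_mod_cast m.two_mul_degree_add_le_wt
  have hp : (p : ℤ) ≤ (p : ℤ) ^ (n + 1) := by exact_mod_cast Nat.le_self_pow n.succ_ne_zero p
  have hI : (0 : ℤ) ≤ m.I.degree := Int.natCast_nonneg _
  rw [Mon.deg_eq_neg_wt_add]
  constructor
  · linarith
  · have hP : (0 : ℤ) ≤ (p : ℤ) ^ (n + 1) := by positivity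
    nlinarith [pow_succ (p : ℤ) n, mul_le_mul_of_nonneg_left hp (sub_nonneg.mpr hE),
      mul_nonneg hP (sub_nonneg.mpr hE)]

/-- an odd-degree monomial of `𝒜 ⫽ E(n)` of weight `w` has
topological degree between `−w + 1` and `−((p−1)/p)·w + 1 − 2pⁿ`. -/
theorem degree_bounds_of_odd (p n : ℕ) [Fact p.Prime] (m : Mon p n)
    (hodd : Odd m.deg) :
    -(m.wt : ℤ) + 1 ≤ m.deg ∧
      (p : ℤ) * m.deg ≤ -((p : ℤ) - 1) * m.wt + p * (1 - 2 * (p : ℤ) ^ n) :=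
  degree_bounds_of_odd_general p n m hodd
end

section
/- Let ℓ ≥ 1 and 0 ≤ k ≤ n be integers, and suppose b_(I′,E′) occurs with nonzero coefficient in Q_k b_(I,E). If k ≤ n − ℓ, then mw_ℓ(I′,E′) = mw_ℓ(I,E) − 2p^{k+ℓ} (the ℓ-mixed weight decreases by exactly 2p^{k+ℓ}). If n − ℓ < k ≤ n, then mw_ℓ(I′,E′) ≤ mw_ℓ(I,E) − 2p^{n+1}; in particular, writing F^{n,ℓ}_s for the span of basis vectors b_(I,E) with mw_ℓ(I,E) ≤ s, one has Q_k(F^{n,ℓ}_s) ⊆ F^{n,ℓ}_{s−2p^{n+1}} for all s. -/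
/-- `M(n)`: the `𝔽_p`-vector space with basis `b_(I,E)` indexed by the
monomials for `𝒜 ⫽ E(n)`. -/
abbrev MSp (p n : ℕ) := Mon p n →₀ ZMod p

/-- The value of the Milnor primitive `Q_k` on the basis vector `b_(I,E)`:
`Q_k b_(I,E) = Σ_{t≥1} (−1)^{#{j < n+t : E j = 1}} b_(I − p^k·e_{n+t−k}, E + e_{n+t})`,
the `t`-th term (with `j = n + t − k`) present iff `I (n+t−k) ≥ p^k` and `E (n+t) = 0`. -/
noncomputable def Qmon (p n k : ℕ) (m : Mon p n) : MSp p n :=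
  ∑ j ∈ m.I.support,
    if h : n + 1 ≤ j + k ∧ p ^ k ≤ m.I j ∧ m.E (j + k) = 0 then
      Finsupp.single
        { I := m.I - Finsupp.single j (p ^ k)
          E := m.E + Finsupp.single (j + k) 1
          hI0 := by
            have h0 := m.hI0
            simp [Finsupp.tsub_apply, h0]
          hE1 := by
            intro i
            by_cases hi : i = j + k
            · subst hi
              simp [Finsupp.add_apply, h.2.2]
            · have h2 : (Finsupp.single (j + k) 1 : ℕ →₀ ℕ) i = 0 :=
                Finsupp.single_eq_of_ne fun hc => hi hc
              simpa [Finsupp.add_apply, h2] using m.hE1 i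
          hEn := by
            intro i hi
            have h1 := m.hEn i hi
            have hne : j + k ≠ i := by
              have := h.1; omega
            have h2 : (Finsupp.single (j + k) 1 : ℕ →₀ ℕ) i = 0 :=
              Finsupp.single_eq_of_ne hne.symm
            simp [Finsupp.add_apply, h1, h2] }
        ((-1 : ZMod p) ^ ((Finset.range (j + k)).filter fun i => m.E i = 1).card)
    else 0

/-- The Milnor primitive `Q_k`, as a linear operator on `M(n)`. -/
noncomputable def Q (p n k : ℕ) : MSp p n →ₗ[ZMod p] MSp p n :=
  Finsupp.lsum (ZMod p) fun m => LinearMap.toSpanSingleton (ZMod p) (MSp p n) (Qmon p n k m)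

/-- The filtration `F^{n,ℓ}_s`: the span of the basis vectors `b_(I,E)` with
`ℓ`-mixed weight at most `s`. -/
noncomputable def mwSub (p n ℓ : ℕ) (s : ℤ) : Submodule (ZMod p) (MSp p n) :=
  Submodule.span (ZMod p)
    {x | ∃ m : Mon p n, (m.mw ℓ : ℤ) ≤ s ∧ x = Finsupp.single m 1}

variable {p n : ℕ}

lemma mw_sub_aux (ℓ k : ℕ) (m m' : Mon p n) (j : ℕ)
    (hle : p ^ k ≤ m.I j)
    (hI : m'.I = m.I - Finsupp.single j (p ^ k)) :
    m.mw ℓ = m'.mw ℓ + (if j < ℓ then 2 * p ^ j * p ^ k else 2 * p ^ ℓ * p ^ k) := by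
  have hIeq : m.I = m'.I + Finsupp.single j (p ^ k) := by
    rw [hI, tsub_add_cancel_of_le]
    exact (Finsupp.single_le_iff).2 hle
  unfold Mon.mw
  rw [hIeq, Finsupp.sum_add_index', Finsupp.sum_single_index]
  · simp
  · intro i; simp
  · intro i a b; split <;> ring

lemma Qmon_struct (k : ℕ) (m m' : Mon p n) (h : Qmon p n k m m' ≠ 0) :
    ∃ j, n + 1 ≤ j + k ∧ p ^ k ≤ m.I j ∧
      m'.I = m.I - Finsupp.single j (p ^ k) := by
  unfold Qmon at h
  rw [Finsupp.finset_sum_apply] at h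
  obtain ⟨j, _, hj⟩ := Finset.exists_ne_zero_of_sum_ne_zero h
  by_cases hc : n + 1 ≤ j + k ∧ p ^ k ≤ m.I j ∧ m.E (j + k) = 0
  · rw [dif_pos hc] at hj
    refine ⟨j, hc.1, hc.2.1, ?_⟩
    rcases Finsupp.single_apply_ne_zero.1 hj with ⟨rfl, -⟩
    rfl
  · rw [dif_neg hc] at hj; simp at hj

lemma Q_single (k : ℕ) (m : Mon p n) :
    Q p n k (Finsupp.single m 1) = Qmon p n k m := by
  simp [Q]

/-- for `ℓ ≥ 1` and `0 ≤ k ≤ n`, if `b_(I′,E′)` occurs with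
nonzero coefficient in `Q_k b_(I,E)` then the `ℓ`-mixed weight drops by
exactly `2p^{k+ℓ}` when `k + ℓ ≤ n`, and by at least `2p^{n+1}` when
`n < k + ℓ`; in particular in the latter case
`Q_k (F^{n,ℓ}_s) ⊆ F^{n,ℓ}_{s − 2p^{n+1}}` for all `s`. -/
theorem Q_mixed_weight (p n ℓ k : ℕ) [Fact p.Prime] (hℓ : 1 ≤ ℓ) (hk : k ≤ n) :
    (∀ m m' : Mon p n, Q p n k (Finsupp.single m 1) m' ≠ 0 →
        (k + ℓ ≤ n → (m'.mw ℓ : ℤ) = (m.mw ℓ : ℤ) - 2 * (p : ℤ) ^ (k + ℓ)) ∧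
        (n < k + ℓ → (m'.mw ℓ : ℤ) ≤ (m.mw ℓ : ℤ) - 2 * (p : ℤ) ^ (n + 1))) ∧
      (n < k + ℓ → ∀ s : ℤ, ∀ x ∈ mwSub p n ℓ s,
        Q p n k x ∈ mwSub p n ℓ (s - 2 * (p : ℤ) ^ (n + 1))) := by
  have hp1 : 1 ≤ p := (Fact.out : p.Prime).one_lt.le
  have core : ∀ (m m' : Mon p n) (j : ℕ), n + 1 ≤ j + k → p ^ k ≤ m.I j →
      m'.I = m.I - Finsupp.single j (p ^ k) →
      (k + ℓ ≤ n → (m'.mw ℓ : ℤ) = (m.mw ℓ : ℤ) - 2 * (p : ℤ) ^ (k + ℓ)) ∧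
      (n < k + ℓ → (m'.mw ℓ : ℤ) ≤ (m.mw ℓ : ℤ) - 2 * (p : ℤ) ^ (n + 1)) := by
    intro m m' j hjk hle hI
    have key := mw_sub_aux ℓ k m m' j hle hI
    constructor
    · intro hn
      have hjℓ : ¬ j < ℓ := by omega
      rw [if_neg hjℓ] at key
      have : (m.mw ℓ : ℤ) = (m'.mw ℓ : ℤ) + 2 * (p : ℤ) ^ (k + ℓ) := by
        rw [key]; push_cast; rw [pow_add]; ring
      omega
    · intro hn
      have hdrop : 2 * p ^ (n + 1) + m'.mw ℓ ≤ m.mw ℓ := by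
        rw [key]
        have : 2 * p ^ (n + 1) ≤ (if j < ℓ then 2 * p ^ j * p ^ k else 2 * p ^ ℓ * p ^ k) := by
          split
          · rw [mul_assoc, ← pow_add]
            exact Nat.mul_le_mul_left 2 (Nat.pow_le_pow_right hp1 (by omega))
          · rw [mul_assoc, ← pow_add]
            exact Nat.mul_le_mul_left 2 (Nat.pow_le_pow_right hp1 (by omega))
        omega
      have := (Nat.cast_le (α := ℤ)).2 hdrop
      push_cast at this
      omega
  constructor
  · intro m m' h
    rw [Q_single] at h
    obtain ⟨j, hjk, hle, hI⟩ := Qmon_struct k m m' h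
    exact core m m' j hjk hle hI
  · intro hn s x hx
    refine Submodule.span_induction ?_ ?_ ?_ ?_ hx
    · rintro x ⟨m, hms, rfl⟩
      rw [Q_single]
      unfold Qmon
      refine Submodule.sum_mem _ ?_
      intro j hj
      split
      next hc =>
        rw [← mul_one ((-1 : ZMod p) ^ ((Finset.range (j + k)).filter fun i => m.E i = 1).card),
          ← Finsupp.smul_single']
        refine Submodule.smul_mem _ _ (Submodule.subset_span ⟨_, ?_, rfl⟩)
        refine le_trans ((core m _ j hc.1 hc.2.1 rfl).2 hn) (by omega)
      next => exact Submodule.zero_mem _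
    · simp
    · intro a b _ _ ha hb; rw [map_add]; exact Submodule.add_mem _ ha hb
    · intro c a _ ha; rw [map_smul]; exact Submodule.smul_mem _ _ ha
end

section
/- Let 0 ≤ k ≤ n and let x ∈ M(n) be a linear combination of basis vectors b_(I,E) whose monomials (I,E) all have odd degree. If Q_k x = 0, then there exists y ∈ M(n) with x = Q_k y. (Exactness of the Q_k-action on odd-degree elements of A//E(n).) -/
namespace QExact

open Finsupp

theorem mon_ext {p n : ℕ} {m m' : Mon p n} (hI : m.I = m'.I) (hE : m.E = m'.E) :
    m = m' := by
  cases m; cases m'; cases hI; cases hE; rfl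

/-- The sign `(−1)^{#{i < N : E i = 1}}`. -/
def sgn (p : ℕ) (E : ℕ →₀ ℕ) (N : ℕ) : ZMod p :=
  (-1 : ZMod p) ^ ((Finset.range N).filter fun i => E i = 1).card

theorem sgn_congr (p : ℕ) {E E' : ℕ →₀ ℕ} {N : ℕ} (h : ∀ i < N, E i = E' i) :
    sgn p E N = sgn p E' N := by
  have h2 : ((Finset.range N).filter fun i => E i = 1)
      = (Finset.range N).filter fun i => E' i = 1 :=
    Finset.filter_congr fun i hi => by rw [h i (Finset.mem_range.mp hi)]
  rw [sgn, sgn, h2]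

theorem sgn_mul_self (p : ℕ) (E : ℕ →₀ ℕ) (N : ℕ) : sgn p E N * sgn p E N = 1 := by
  rw [sgn, ← pow_add, ← two_mul, pow_mul]
  norm_num

theorem sgn_sub_single (p : ℕ) {E : ℕ →₀ ℕ} {M N : ℕ} (hM : M < N) (hE : E M = 1) :
    sgn p (E - Finsupp.single M 1) N = -sgn p E N := by
  have hfilter : ((Finset.range N).filter fun i => (E - Finsupp.single M 1 : ℕ →₀ ℕ) i = 1)
      = ((Finset.range N).filter fun i => E i = 1).erase M := by
    ext i
    simp only [Finset.mem_erase, Finset.mem_filter, Finset.mem_range, Finsupp.tsub_apply,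
      Finsupp.single_apply]
    constructor
    · rintro ⟨h1, h2⟩
      split_ifs at h2 with h
      · subst h; omega
      · exact ⟨fun hc => h hc.symm, h1, by omega⟩
    · rintro ⟨h1, h2, h3⟩
      refine ⟨h2, ?_⟩
      rw [if_neg fun hc => h1 hc.symm]
      omega
  have hmem : M ∈ (Finset.range N).filter fun i => E i = 1 := by
    simp [Finset.mem_filter, Finset.mem_range, hM, hE]
  rw [sgn, sgn, hfilter, Finset.card_erase_of_mem hmem]
  obtain ⟨c, hc⟩ : ∃ c, ((Finset.range N).filter fun i => E i = 1).card = c + 1 :=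
    ⟨((Finset.range N).filter fun i => E i = 1).card - 1, by
      have := Finset.card_pos.mpr ⟨M, hmem⟩; omega⟩
  rw [hc, Nat.add_sub_cancel, pow_succ]
  ring

theorem sgn_add_single (p : ℕ) {E : ℕ →₀ ℕ} {M N : ℕ} (hM : M < N) (hE : E M = 0) :
    sgn p (E + Finsupp.single M 1) N = -sgn p E N := by
  have hfilter : ((Finset.range N).filter fun i => (E + Finsupp.single M 1 : ℕ →₀ ℕ) i = 1)
      = insert M ((Finset.range N).filter fun i => E i = 1) := by
    ext i
    simp only [Finset.mem_insert, Finset.mem_filter, Finset.mem_range, Finsupp.add_apply,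
      Finsupp.single_apply]
    constructor
    · rintro ⟨h1, h2⟩
      split_ifs at h2 with h
      · exact Or.inl h.symm
      · exact Or.inr ⟨h1, by omega⟩
    · rintro (rfl | ⟨h1, h2⟩)
      · simp [hE, hM]
      · refine ⟨h1, ?_⟩
        split_ifs with h
        · subst h; omega
        · omega
  have hnmem : M ∉ (Finset.range N).filter fun i => E i = 1 := by
    simp [Finset.mem_filter, hE]
  rw [sgn, sgn, hfilter, Finset.card_insert_of_notMem hnmem, pow_succ]
  ring

/-- Pointwise helpers for `ℕ`-valued finsupps. -/
theorem sub_add_single (f : ℕ →₀ ℕ) {a b : ℕ} (ca cb : ℕ) (hab : a ≠ b) :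
    (f - Finsupp.single b cb) + Finsupp.single a ca
      = (f + Finsupp.single a ca) - Finsupp.single b cb := by
  ext x
  simp only [Finsupp.add_apply, Finsupp.tsub_apply, Finsupp.single_apply]
  split_ifs with h1 h2 h2
  · exact absurd (h1.trans h2.symm) (Ne.symm hab)
  · omega
  · omega
  · omega

theorem sub_add_single_cancel (f : ℕ →₀ ℕ) {a : ℕ} {ca : ℕ} (h : ca ≤ f a) :
    (f - Finsupp.single a ca) + Finsupp.single a ca = f := by
  ext x
  simp only [Finsupp.add_apply, Finsupp.tsub_apply, Finsupp.single_apply]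
  split_ifs with h1
  · subst h1; omega
  · omega

theorem add_single_sub_cancel (f : ℕ →₀ ℕ) (a ca : ℕ) :
    (f + Finsupp.single a ca) - Finsupp.single a ca = f := by
  ext x
  simp only [Finsupp.add_apply, Finsupp.tsub_apply, Finsupp.single_apply]
  split_ifs with h1
  · omega
  · omega

end QExact
namespace QExact

variable (p n k : ℕ)

/-- `j` is a "bad" index for the monomial `m`. -/
def B (m : Mon p n) (j : ℕ) : Prop :=
  1 ≤ j ∧ n + 1 ≤ j + k ∧ (m.E (j + k) = 1 ∨ p ^ k ≤ m.I j)

instance (m : Mon p n) : DecidablePred (B p n k m) := fun _ =>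
  decidable_of_iff (1 ≤ _ ∧ n + 1 ≤ _ + k ∧ (m.E _ = 1 ∨ p ^ k ≤ m.I _)) Iff.rfl

/-- Add `p^k` to `I` at `j` and remove the `τ` at `j + k`. -/
noncomputable def up (m : Mon p n) (j : ℕ) : Mon p n where
  I := m.I + if j = 0 then 0 else Finsupp.single j (p ^ k)
  E := m.E - Finsupp.single (j + k) 1
  hI0 := by
    split_ifs with h
    · simp [m.hI0]
    · have h2 : (Finsupp.single j (p ^ k) : ℕ →₀ ℕ) 0 = 0 :=
        Finsupp.single_eq_of_ne (Ne.symm h)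
      simp [Finsupp.add_apply, m.hI0, h2]
  hE1 := by
    intro i
    have h1 : (m.E - Finsupp.single (j + k) 1 : ℕ →₀ ℕ) i ≤ m.E i := by
      rw [Finsupp.tsub_apply]; exact Nat.sub_le _ _
    exact le_trans h1 (m.hE1 i)
  hEn := by
    intro i hi
    have h1 := m.hEn i hi
    simp [Finsupp.tsub_apply, h1]

/-- Remove `p^k` from `I` at `j` and add a `τ` at `j + k`. -/
noncomputable def dn (m : Mon p n) (j : ℕ) : Mon p n where
  I := m.I - Finsupp.single j (p ^ k)
  E := m.E + if n + 1 ≤ j + k ∧ m.E (j + k) = 0 then Finsupp.single (j + k) 1 else 0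
  hI0 := by
    have h0 := m.hI0
    simp [Finsupp.tsub_apply, h0]
  hE1 := by
    intro i
    split_ifs with h
    · by_cases hi : i = j + k
      · subst hi
        simp [Finsupp.add_apply, h.2]
      · have h2 : (Finsupp.single (j + k) 1 : ℕ →₀ ℕ) i = 0 :=
          Finsupp.single_eq_of_ne fun hc => hi hc
        simpa [Finsupp.add_apply, h2] using m.hE1 i
    · simpa using m.hE1 i
  hEn := by
    intro i hi
    split_ifs with h
    · have h1 := m.hEn i hi
      have hne : j + k ≠ i := by have := h.1; omega
      have h2 : (Finsupp.single (j + k) 1 : ℕ →₀ ℕ) i = 0 := Finsupp.single_eq_of_ne hne.symm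
      simp [Finsupp.add_apply, h1, h2]
    · simpa using m.hEn i hi

theorem up_I (m : Mon p n) {j : ℕ} (hj : j ≠ 0) :
    (up p n k m j).I = m.I + Finsupp.single j (p ^ k) := by
  show m.I + (if j = 0 then 0 else Finsupp.single j (p ^ k)) = _
  rw [if_neg hj]

theorem up_E (m : Mon p n) (j : ℕ) :
    (up p n k m j).E = m.E - Finsupp.single (j + k) 1 := rfl

theorem dn_I (m : Mon p n) (j : ℕ) :
    (dn p n k m j).I = m.I - Finsupp.single j (p ^ k) := rfl

theorem dn_E (m : Mon p n) {j : ℕ} (h1 : n + 1 ≤ j + k) (h2 : m.E (j + k) = 0) :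
    (dn p n k m j).E = m.E + Finsupp.single (j + k) 1 := by
  show m.E + (if n + 1 ≤ j + k ∧ m.E (j + k) = 0 then Finsupp.single (j + k) 1 else 0)
      = m.E + Finsupp.single (j + k) 1
  rw [if_pos ⟨h1, h2⟩]

open Classical in
/-- The contracting homotopy, on a basis monomial. -/
noncomputable def hmon (m : Mon p n) : MSp p n :=
  if hb : ∃ j, B p n k m j then
    if m.E (Nat.find hb + k) = 1 then
      Finsupp.single (up p n k m (Nat.find hb)) (sgn p m.E (Nat.find hb + k))
    else 0
  else 0

theorem hmon_spec (m : Mon p n) (j₀ : ℕ) (hB : B p n k m j₀)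
    (hmin : ∀ i < j₀, ¬ B p n k m i) :
    hmon p n k m =
      if m.E (j₀ + k) = 1 then Finsupp.single (up p n k m j₀) (sgn p m.E (j₀ + k))
      else 0 := by
  have hb : ∃ j, B p n k m j := ⟨j₀, hB⟩
  have hfind : Nat.find hb = j₀ := (Nat.find_eq_iff hb).2 ⟨hB, hmin⟩
  rw [hmon, dif_pos hb, hfind]

theorem hmon_eq_zero_of_no_bad (m : Mon p n) (h : ¬ ∃ j, B p n k m j) :
    hmon p n k m = 0 := by
  rw [hmon, dif_neg h]

/-- Rewriting `Qmon` in terms of `dn` and `sgn`. -/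
theorem Qmon_eq (m : Mon p n) :
    Qmon p n k m = ∑ j ∈ m.I.support,
      if n + 1 ≤ j + k ∧ p ^ k ≤ m.I j ∧ m.E (j + k) = 0 then
        Finsupp.single (dn p n k m j) (sgn p m.E (j + k))
      else 0 := by
  rw [Qmon]
  refine Finset.sum_congr rfl fun j hj => ?_
  by_cases h : n + 1 ≤ j + k ∧ p ^ k ≤ m.I j ∧ m.E (j + k) = 0
  · rw [dif_pos h, if_pos h]
    congr 1
    exact mon_ext rfl (dn_E p n k m h.1 h.2.2).symm
  · rw [dif_neg h, if_neg h]

theorem Q_single (m : Mon p n) (c : ZMod p) :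
    Q p n k (Finsupp.single m c) = c • Qmon p n k m := by
  rw [Q]
  simp

/-- The contracting homotopy as a linear map. -/
noncomputable def Hmap : MSp p n →ₗ[ZMod p] MSp p n :=
  Finsupp.lsum (ZMod p) fun m => LinearMap.toSpanSingleton (ZMod p) (MSp p n) (hmon p n k m)

theorem Hmap_single (m : Mon p n) (c : ZMod p) :
    Hmap p n k (Finsupp.single m c) = c • hmon p n k m := by
  rw [Hmap]
  simp

end QExact
namespace QExact

/-- The homotopy identity `Q ∘ h + h ∘ Q = id` on basis monomials admitting a bad index. -/
theorem key {p n k : ℕ} (hp : 0 < p) (hk : k ≤ n) (m : Mon p n)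
    (hm : ∃ j, B p n k m j) :
    Q p n k (hmon p n k m) + Hmap p n k (Qmon p n k m) = Finsupp.single m 1 := by
  classical
  obtain ⟨j₀, hB, hmin⟩ : ∃ j₀, B p n k m j₀ ∧ ∀ i < j₀, ¬ B p n k m i :=
    ⟨Nat.find hm, Nat.find_spec hm, fun i hi => Nat.find_min hm hi⟩
  have hj₀0 : j₀ ≠ 0 := by have := hB.1; omega
  have hppos : 0 < p ^ k := Nat.pow_pos hp
  have hHQ : Hmap p n k (Qmon p n k m) = ∑ j ∈ m.I.support,
      if n + 1 ≤ j + k ∧ p ^ k ≤ m.I j ∧ m.E (j + k) = 0 then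
        sgn p m.E (j + k) • hmon p n k (dn p n k m j)
      else 0 := by
    rw [Qmon_eq, map_sum]
    refine Finset.sum_congr rfl fun j hj => ?_
    split_ifs with h
    · rw [Hmap_single]
    · exact map_zero _
  by_cases hE : m.E (j₀ + k) = 1
  · -- Case C: there is a `τ` at the least bad position
    rw [hmon_spec p n k m j₀ hB hmin, if_pos hE, Q_single, hHQ, Qmon_eq]
    set u := up p n k m j₀ with hu
    have huI : u.I = m.I + Finsupp.single j₀ (p ^ k) := up_I p n k m hj₀0
    have huE : u.E = m.E - Finsupp.single (j₀ + k) 1 := up_E p n k m j₀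
    have hsupp : u.I.support = insert j₀ m.I.support := by
      ext a
      rw [huI]
      simp only [Finsupp.mem_support_iff, Finset.mem_insert, Finsupp.add_apply,
        Finsupp.single_apply]
      split_ifs with h <;> omega
    have hj₀zero : (if n + 1 ≤ j₀ + k ∧ p ^ k ≤ m.I j₀ ∧ m.E (j₀ + k) = 0 then
        sgn p m.E (j₀ + k) • hmon p n k (dn p n k m j₀) else 0) = 0 :=
      if_neg fun hcc => by have := hcc.2.2; omega
    have hext : (∑ j ∈ insert j₀ m.I.support,
        if n + 1 ≤ j + k ∧ p ^ k ≤ m.I j ∧ m.E (j + k) = 0 then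
          sgn p m.E (j + k) • hmon p n k (dn p n k m j) else 0)
        = ∑ j ∈ m.I.support,
          if n + 1 ≤ j + k ∧ p ^ k ≤ m.I j ∧ m.E (j + k) = 0 then
            sgn p m.E (j + k) • hmon p n k (dn p n k m j) else 0 :=
      Finset.sum_insert_of_eq_zero_if_notMem fun _ => hj₀zero
    rw [hsupp, ← hext, Finset.smul_sum, ← Finset.sum_add_distrib]
    have hper : ∀ j ∈ insert j₀ m.I.support,
        (sgn p m.E (j₀ + k) •
            if n + 1 ≤ j + k ∧ p ^ k ≤ u.I j ∧ u.E (j + k) = 0 then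
              Finsupp.single (dn p n k u j) (sgn p u.E (j + k)) else 0)
          + (if n + 1 ≤ j + k ∧ p ^ k ≤ m.I j ∧ m.E (j + k) = 0 then
              sgn p m.E (j + k) • hmon p n k (dn p n k m j) else 0)
        = if j = j₀ then Finsupp.single m 1 else 0 := by
      intro j hj
      by_cases hjj : j = j₀
      · subst hjj
        have hcu : n + 1 ≤ j + k ∧ p ^ k ≤ u.I j ∧ u.E (j + k) = 0 := by
          refine ⟨hB.2.1, ?_, ?_⟩
          · rw [huI, Finsupp.add_apply, Finsupp.single_eq_same]; omega
          · rw [huE, Finsupp.tsub_apply, Finsupp.single_eq_same, hE]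
        have hcm : ¬ (n + 1 ≤ j + k ∧ p ^ k ≤ m.I j ∧ m.E (j + k) = 0) := by
          rintro ⟨-, -, hcc⟩; omega
        rw [if_pos hcu, if_neg hcm, add_zero, if_pos rfl]
        have hdnu : dn p n k u j = m := by
          refine mon_ext ?_ ?_
          · rw [dn_I, huI]
            exact add_single_sub_cancel m.I _ _
          · rw [dn_E p n k u hB.2.1 hcu.2.2, huE]
            exact sub_add_single_cancel m.E (by omega)
        have hsgnu : sgn p u.E (j + k) = sgn p m.E (j + k) := by
          rw [huE]
          exact sgn_congr p fun i hi => by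
            rw [Finsupp.tsub_apply, Finsupp.single_eq_of_ne (by omega : i ≠ j + k),
              Nat.sub_zero]
        rw [hdnu, hsgnu, Finsupp.smul_single, smul_eq_mul, sgn_mul_self]
      · rw [if_neg hjj]
        have huIj : u.I j = m.I j := by
          rw [huI, Finsupp.add_apply, Finsupp.single_eq_of_ne (by omega : j ≠ j₀), add_zero]
        have huEj : u.E (j + k) = m.E (j + k) := by
          rw [huE, Finsupp.tsub_apply, Finsupp.single_eq_of_ne (by omega : j + k ≠ j₀ + k),
            Nat.sub_zero]
        by_cases hc : n + 1 ≤ j + k ∧ p ^ k ≤ m.I j ∧ m.E (j + k) = 0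
        · have hcu : n + 1 ≤ j + k ∧ p ^ k ≤ u.I j ∧ u.E (j + k) = 0 := by
            rw [huIj, huEj]; exact hc
          rw [if_pos hcu, if_pos hc]
          have h1j : 1 ≤ j := by omega
          have hgt : j₀ < j := by
            rcases Nat.lt_trichotomy j j₀ with h | h | h
            · exact absurd ⟨h1j, hc.1, Or.inr hc.2.1⟩ (hmin j h)
            · exact absurd h hjj
            · exact h
          have hdE : (dn p n k m j).E = m.E + Finsupp.single (j + k) 1 :=
            dn_E p n k m hc.1 hc.2.2
          have hdEj₀ : (dn p n k m j).E (j₀ + k) = 1 := by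
            rw [hdE, Finsupp.add_apply, Finsupp.single_eq_of_ne (by omega : j₀ + k ≠ j + k),
              add_zero, hE]
          have hBd : B p n k (dn p n k m j) j₀ := ⟨hB.1, hB.2.1, Or.inl hdEj₀⟩
          have hmind : ∀ i < j₀, ¬ B p n k (dn p n k m j) i := by
            intro i hi hBi
            refine hmin i hi ⟨hBi.1, hBi.2.1, ?_⟩
            rcases hBi.2.2 with h | h
            · left
              rwa [hdE, Finsupp.add_apply,
                Finsupp.single_eq_of_ne (by omega : i + k ≠ j + k), add_zero] at h
            · right
              rwa [dn_I, Finsupp.tsub_apply,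
                Finsupp.single_eq_of_ne (by omega : i ≠ j), Nat.sub_zero] at h
          rw [hmon_spec p n k _ j₀ hBd hmind, if_pos hdEj₀]
          have hsgnd : sgn p (dn p n k m j).E (j₀ + k) = sgn p m.E (j₀ + k) := by
            rw [hdE]
            exact sgn_congr p fun i hi => by
              rw [Finsupp.add_apply, Finsupp.single_eq_of_ne (by omega : i ≠ j + k), add_zero]
          have hmons : up p n k (dn p n k m j) j₀ = dn p n k u j := by
            refine mon_ext ?_ ?_
            · rw [up_I p n k _ hj₀0, dn_I, dn_I, huI]
              exact sub_add_single m.I _ _ (by omega)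
            · rw [up_E, hdE, dn_E p n k u hc.1 hcu.2.2, huE]
              exact (sub_add_single m.E _ _ (by omega : j + k ≠ j₀ + k)).symm
          have hsgnflip : sgn p u.E (j + k) = -sgn p m.E (j + k) := by
            rw [huE]
            exact sgn_sub_single p (by omega : j₀ + k < j + k) hE
          rw [hmons, hsgnd, hsgnflip, Finsupp.smul_single, Finsupp.smul_single,
            smul_eq_mul, smul_eq_mul, ← Finsupp.single_add]
          have hco : sgn p m.E (j₀ + k) * -sgn p m.E (j + k)
              + sgn p m.E (j + k) * sgn p m.E (j₀ + k) = 0 := by ring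
          rw [hco, Finsupp.single_zero]
        · rw [if_neg hc, if_neg (fun hcc => hc (by rw [huIj, huEj] at hcc; exact hcc)),
            smul_zero, zero_add]
    refine Eq.trans (Finset.sum_congr rfl hper) ?_
    rw [Finset.sum_ite_eq' (insert j₀ m.I.support) j₀ fun _ => Finsupp.single m 1,
      if_pos (Finset.mem_insert_self _ _)]
  · -- Case B: no `τ` at the least bad position
    have hE0 : m.E (j₀ + k) = 0 := by have := m.hE1 (j₀ + k); omega
    have hIj₀ : p ^ k ≤ m.I j₀ := hB.2.2.resolve_left hE
    have hmem : j₀ ∈ m.I.support := Finsupp.mem_support_iff.2 (by omega)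
    rw [hmon_spec p n k m j₀ hB hmin, if_neg hE, map_zero, zero_add, hHQ]
    have hper : ∀ j ∈ m.I.support,
        (if n + 1 ≤ j + k ∧ p ^ k ≤ m.I j ∧ m.E (j + k) = 0 then
          sgn p m.E (j + k) • hmon p n k (dn p n k m j) else 0)
        = if j = j₀ then Finsupp.single m 1 else 0 := by
      intro j hj
      by_cases hjj : j = j₀
      · subst hjj
        rw [if_pos ⟨hB.2.1, hIj₀, hE0⟩, if_pos rfl]
        have hdE : (dn p n k m j).E = m.E + Finsupp.single (j + k) 1 :=
          dn_E p n k m hB.2.1 hE0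
        have hdEj : (dn p n k m j).E (j + k) = 1 := by
          rw [hdE, Finsupp.add_apply, Finsupp.single_eq_same, hE0]
        have hBd : B p n k (dn p n k m j) j := ⟨hB.1, hB.2.1, Or.inl hdEj⟩
        have hmind : ∀ i < j, ¬ B p n k (dn p n k m j) i := by
          intro i hi hBi
          refine hmin i hi ⟨hBi.1, hBi.2.1, ?_⟩
          rcases hBi.2.2 with h | h
          · left
            rwa [hdE, Finsupp.add_apply,
              Finsupp.single_eq_of_ne (by omega : i + k ≠ j + k), add_zero] at h
          · right
            rwa [dn_I, Finsupp.tsub_apply,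
              Finsupp.single_eq_of_ne (by omega : i ≠ j), Nat.sub_zero] at h
        rw [hmon_spec p n k _ j hBd hmind, if_pos hdEj]
        have hsgn : sgn p (dn p n k m j).E (j + k) = sgn p m.E (j + k) := by
          rw [hdE]
          exact sgn_congr p fun i hi => by
            rw [Finsupp.add_apply, Finsupp.single_eq_of_ne (by omega : i ≠ j + k), add_zero]
        have hupdn : up p n k (dn p n k m j) j = m := by
          refine mon_ext ?_ ?_
          · rw [up_I p n k _ hj₀0, dn_I]
            exact sub_add_single_cancel m.I hIj₀
          · rw [up_E, hdE]
            exact add_single_sub_cancel m.E _ _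
        rw [hsgn, hupdn, Finsupp.smul_single, smul_eq_mul, sgn_mul_self]
      · rw [if_neg hjj]
        by_cases hc : n + 1 ≤ j + k ∧ p ^ k ≤ m.I j ∧ m.E (j + k) = 0
        · rw [if_pos hc]
          have h1j : 1 ≤ j := by omega
          have hgt : j₀ < j := by
            rcases Nat.lt_trichotomy j j₀ with h | h | h
            · exact absurd ⟨h1j, hc.1, Or.inr hc.2.1⟩ (hmin j h)
            · exact absurd h hjj
            · exact h
          have hdE : (dn p n k m j).E = m.E + Finsupp.single (j + k) 1 :=
            dn_E p n k m hc.1 hc.2.2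
          have hBd : B p n k (dn p n k m j) j₀ := by
            refine ⟨hB.1, hB.2.1, Or.inr ?_⟩
            rw [dn_I, Finsupp.tsub_apply, Finsupp.single_eq_of_ne (by omega : j₀ ≠ j),
              Nat.sub_zero]
            exact hIj₀
          have hmind : ∀ i < j₀, ¬ B p n k (dn p n k m j) i := by
            intro i hi hBi
            refine hmin i hi ⟨hBi.1, hBi.2.1, ?_⟩
            rcases hBi.2.2 with h | h
            · left
              rwa [hdE, Finsupp.add_apply,
                Finsupp.single_eq_of_ne (by omega : i + k ≠ j + k), add_zero] at h
            · right
              rwa [dn_I, Finsupp.tsub_apply,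
                Finsupp.single_eq_of_ne (by omega : i ≠ j), Nat.sub_zero] at h
          have hdEj₀ : ¬ (dn p n k m j).E (j₀ + k) = 1 := by
            rw [hdE, Finsupp.add_apply, Finsupp.single_eq_of_ne (by omega : j₀ + k ≠ j + k),
              add_zero, hE0]
            omega
          rw [hmon_spec p n k _ j₀ hBd hmind, if_neg hdEj₀, smul_zero]
        · rw [if_neg hc]
    refine Eq.trans (Finset.sum_congr rfl hper) ?_
    rw [Finset.sum_ite_eq' m.I.support j₀ fun _ => Finsupp.single m 1, if_pos hmem]

end QExact
namespace QExact

theorem exists_bad_of_odd {p n k : ℕ} (hk : k ≤ n) (m : Mon p n)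
    (h : Odd (Mon.deg m)) : ∃ j, B p n k m j := by
  -- odd degree forces `E ≠ 0`
  have hE : m.E ≠ 0 := by
    intro hE0
    have hdeg : Mon.deg m = -(m.I.sum fun j a => (2 * (p : ℤ) ^ j - 2) * a) := by
      rw [Mon.deg, hE0, Finsupp.sum_zero_index, sub_zero]
    have h2 : (2 : ℤ) * (m.I.sum fun j a => ((p : ℤ) ^ j - 1) * a)
        = m.I.sum fun j a => (2 * (p : ℤ) ^ j - 2) * a := by
      rw [Finsupp.mul_sum]
      exact Finsupp.sum_congr fun j _ => by ring
    obtain ⟨c, hc⟩ := h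
    rw [hdeg, ← h2] at hc
    omega
  obtain ⟨i, hi⟩ := Finsupp.ne_iff.1 hE
  rw [Finsupp.coe_zero, Pi.zero_apply] at hi
  have hEi : m.E i = 1 := by have := m.hE1 i; omega
  have hin : n + 1 ≤ i := by
    by_contra hcon
    exact hi (m.hEn i (by omega))
  refine ⟨i - k, by omega, by omega, Or.inl ?_⟩
  rw [Nat.sub_add_cancel (by omega : k ≤ i)]
  exact hEi

end QExact

/-- exactness of the `Q_k`-action on odd-degree elements of
`𝒜 ⫽ E(n)`: if `x ∈ M(n)` is a linear combination of odd-degree basis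
vectors and `Q_k x = 0` for some `0 ≤ k ≤ n`, then `x = Q_k y` for some
`y ∈ M(n)`. -/
theorem Q_exact_on_odd (p n k : ℕ) [Fact p.Prime] (hk : k ≤ n) (x : MSp p n)
    (hodd : ∀ m ∈ x.support, Odd (Mon.deg m)) (hx : Q p n k x = 0) :
    ∃ y : MSp p n, x = Q p n k y := by
  classical
  have hp : 0 < p := (Fact.out : p.Prime).pos
  refine ⟨QExact.Hmap p n k x, ?_⟩
  have main : Q p n k (QExact.Hmap p n k x) + QExact.Hmap p n k (Q p n k x) = x := by
    conv_lhs => rw [← Finsupp.sum_single x]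
    rw [Finsupp.sum, map_sum, map_sum, map_sum, map_sum, ← Finset.sum_add_distrib]
    have hper : ∀ m ∈ x.support,
        Q p n k (QExact.Hmap p n k (Finsupp.single m (x m)))
          + QExact.Hmap p n k (Q p n k (Finsupp.single m (x m)))
        = Finsupp.single m (x m) := by
      intro m hm
      rw [QExact.Hmap_single, QExact.Q_single, map_smul, map_smul, ← smul_add,
        QExact.key hp hk m (QExact.exists_bad_of_odd hk m (hodd m hm)),
        Finsupp.smul_single, smul_eq_mul, mul_one]
    refine Eq.trans (Finset.sum_congr rfl hper) ?_
    exact Finsupp.sum_single x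
  rw [hx, map_zero, add_zero] at main
  exact main.symm
end

section
/- Let L ≥ 1 and S ∈ Seq(L). Define T1 = {(R, σ, i) : R ∈ Seq(L), i ∈ ℕ with R(i) ≥ 1, σ ∈ Maj(S, R)} and T2 = {(ℓ, j, R′, σ′) : ℓ ∈ ℕ with S(ℓ) ≥ 1, j ∈ ℕ (j ≥ 0), R′ ∈ Seq(L−1), σ′ ∈ Maj(S − 1_ℓ, R′)}, where S − 1_ℓ is S with its ℓ-th entry decreased by 1. For (R, σ, i) ∈ T1, let ℓ be the ball label assigned by σ to the last (rightmost) box labeled i, let R′ = R − 1_i, and let σ∖i ∈ Maj(S − 1_ℓ, R′) be obtained from σ by deleting that box together with its ball. Then the map (R, σ, i) ↦ (ℓ, i − ℓ, R − 1_i, σ∖i) is a well-defined bijection from T1 onto T2; moreover ind(σ) = ind(σ∖i) when ℓ = i, and ind(σ) = ind(σ∖i) + p^ℓ·e_{i−ℓ} when ℓ < i. (This is the bijection showing that the lift P̃^I of the Steenrod operation P^I to the Koszul resolution is a chain map.) -/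
/-- The label of the box with (0-based) index `b`, for boxes labeled according
to `R`: the first `R 0` boxes are labeled `0`, the next `R 1` boxes are
labeled `1`, and so on.  (For `b < Σ_i R i` this is the unique `i` with
`Σ_{j<i} R j ≤ b < Σ_{j≤i} R j`.) -/
def boxLabel (R : ℕ →₀ ℕ) (b : ℕ) : ℕ :=
  ((Finset.range (R.support.sup id + 1)).filter
    fun i => ∑ j ∈ Finset.range (i + 1), R j ≤ b).card

/-- `f : Fin L → ℕ`, assigning a ball label to each of the `L` boxes, is a
majorization class from `S` to `R`: each ball label `i` is used exactly `S i`
times, and the label of every box is `≥` the ball label assigned to it. -/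
def IsMaj (L : ℕ) (S R : ℕ →₀ ℕ) (f : Fin L → ℕ) : Prop :=
  (∀ i : ℕ, (Finset.univ.filter fun b : Fin L => f b = i).card = S i) ∧
    ∀ b : Fin L, f b ≤ boxLabel R (b : ℕ)

/-- The index `ind(σ) ∈ ⊕_{j≥1} ℤ` of a majorization class: the sum over all
boxes of the local index, a box labeled `i + j` containing a ball labeled `i`
contributing `0` if `j = 0` and `p^i·e_j` if `j > 0`. -/
noncomputable def ind (p L : ℕ) (R : ℕ →₀ ℕ) (f : Fin L → ℕ) : ℕ →₀ ℤ :=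
  ∑ b : Fin L,
    if f b = boxLabel R (b : ℕ) then 0
    else Finsupp.single (boxLabel R (b : ℕ) - f b) ((p : ℤ) ^ f b)

/-- The set `T1` of triples `(R, σ, i)` with `R ∈ Seq(L)`, `R i ≥ 1`, and
`σ ∈ Maj(S, R)`. -/
def T1 (L : ℕ) (S : ℕ →₀ ℕ) : Set ((ℕ →₀ ℕ) × (Fin L → ℕ) × ℕ) :=
  {q | q.1.sum (fun _ a => a) = L ∧ 1 ≤ q.1 q.2.2 ∧ IsMaj L S q.1 q.2.1}

/-- The set `T2` of quadruples `(ℓ, j, R′, σ′)` with `S ℓ ≥ 1`,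
`R′ ∈ Seq(L−1)`, and `σ′ ∈ Maj(S − 1_ℓ, R′)`. -/
def T2 (L : ℕ) (S : ℕ →₀ ℕ) : Set (ℕ × ℕ × (ℕ →₀ ℕ) × (Fin (L - 1) → ℕ)) :=
  {q | 1 ≤ S q.1 ∧ q.2.2.1.sum (fun _ a => a) = L - 1 ∧
    IsMaj (L - 1) (S - Finsupp.single q.1 1) q.2.2.1 q.2.2.2}

/-- Deletion of the box with index `b0` (together with its ball) from a box
labeling `f` on `L` boxes, producing a labeling on `L − 1` boxes. -/
def majDelete (L : ℕ) (hL : 1 ≤ L) (b0 : ℕ) (f : Fin L → ℕ) :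
    Fin (L - 1) → ℕ := fun c =>
  if (c : ℕ) < b0 then f ⟨(c : ℕ), by have := c.isLt; omega⟩
  else f ⟨(c : ℕ) + 1, by have := c.isLt; omega⟩

/-- The map `(R, σ, i) ↦ (ℓ, i − ℓ, R − 1_i, σ∖i)`, where `ℓ` is the ball
label assigned by `σ` to the last box labeled `i` (the box with index
`(Σ_{j≤i} R j) − 1`), and `σ∖i` is obtained from `σ` by deleting that box
together with its ball. -/
noncomputable def majStep (L : ℕ) (hL : 1 ≤ L) :
    (ℕ →₀ ℕ) × (Fin L → ℕ) × ℕ → ℕ × ℕ × (ℕ →₀ ℕ) × (Fin (L - 1) → ℕ) :=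
  fun q =>
    let R := q.1
    let f := q.2.1
    let i := q.2.2
    let b0 : ℕ := (∑ j ∈ Finset.range (i + 1), R j) - 1
    let l : ℕ := f ⟨min b0 (L - 1), lt_of_le_of_lt (Nat.min_le_right _ _) (by omega)⟩
    (l, i - l, R - Finsupp.single i 1, majDelete L hL b0 f)

namespace MajAux

def cum (R : ℕ →₀ ℕ) (n : ℕ) : ℕ := ∑ j ∈ Finset.range n, R j

lemma cum_mono (R : ℕ →₀ ℕ) : Monotone (cum R) := fun _ _ h =>
  Finset.sum_le_sum_of_subset (Finset.range_subset_range.2 h)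

lemma cum_succ (R : ℕ →₀ ℕ) (n : ℕ) : cum R (n + 1) = cum R n + R n :=
  Finset.sum_range_succ _ _

lemma cum_eq_sum (R : ℕ →₀ ℕ) {n : ℕ} (hn : R.support.sup id < n) :
    cum R n = R.sum fun _ a => a := by
  rw [Finsupp.sum]
  refine (Finset.sum_subset ?_ ?_).symm
  · intro j hj
    exact Finset.mem_range.2 (lt_of_le_of_lt (Finset.le_sup (f := id) hj) hn)
  · intro j _ hj
    exact Finsupp.notMem_support_iff.1 hj

lemma cum_le_sum (R : ℕ →₀ ℕ) (n : ℕ) : cum R n ≤ R.sum fun _ a => a := by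
  calc cum R n ≤ cum R (max n (R.support.sup id + 1)) :=
        cum_mono R (le_max_left _ _)
    _ = _ := cum_eq_sum R (lt_of_lt_of_le (Nat.lt_succ_self _) (le_max_right _ _))

lemma boxLabel_spec (R : ℕ →₀ ℕ) {b : ℕ} (hb : b < R.sum fun _ a => a) :
    cum R (boxLabel R b) ≤ b ∧ b < cum R (boxLabel R b + 1) := by
  have hex : ∃ n, b < cum R (n + 1) :=
    ⟨R.support.sup id, by rw [cum_eq_sum R (Nat.lt_succ_self _)]; exact hb⟩
  have hk := Nat.find_spec hex
  have hks : Nat.find hex ≤ R.support.sup id := Nat.find_le (by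
    rw [cum_eq_sum R (Nat.lt_succ_self _)]; exact hb)
  have hfilter : ((Finset.range (R.support.sup id + 1)).filter
      fun i => ∑ j ∈ Finset.range (i + 1), R j ≤ b) = Finset.range (Nat.find hex) := by
    ext i
    simp only [Finset.mem_filter, Finset.mem_range]
    constructor
    · rintro ⟨_, h2⟩
      have h2' : cum R (i + 1) ≤ b := h2
      by_contra h
      push_neg at h
      have := cum_mono R (Nat.add_le_add_right h 1)
      omega
    · intro h
      refine ⟨by omega, ?_⟩
      have := Nat.find_min hex h
      show cum R (i + 1) ≤ b
      omega
  have hbl : boxLabel R b = Nat.find hex := by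
    rw [boxLabel, hfilter, Finset.card_range]
  rw [hbl]
  refine ⟨?_, hk⟩
  rcases Nat.eq_zero_or_pos (Nat.find hex) with h | h
  · rw [h]; simp [cum]
  · have := Nat.find_min hex (m := Nat.find hex - 1) (by omega)
    have h2 : Nat.find hex - 1 + 1 = Nat.find hex := by omega
    rw [h2] at this
    omega

lemma boxLabel_eq (R : ℕ →₀ ℕ) {b i : ℕ} (hb : b < R.sum fun _ a => a)
    (h1 : cum R i ≤ b) (h2 : b < cum R (i + 1)) : boxLabel R b = i := by
  obtain ⟨s1, s2⟩ := boxLabel_spec R hb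
  by_contra h
  rcases lt_or_gt_of_ne h with h | h
  · exact absurd (lt_of_lt_of_le s2 (cum_mono R (by omega))) (not_lt.2 h1)
  · exact absurd (lt_of_lt_of_le h2 (cum_mono R (by omega))) (not_lt.2 s1)

end MajAux
section SUBS
open MajAux

variable {R : ℕ →₀ ℕ} {i : ℕ}

lemma cum_sub_single (hi : 1 ≤ R i) (n : ℕ) :
    cum (R - Finsupp.single i 1) n + (if i < n then 1 else 0) = cum R n := by
  have hpt : ∀ j, (R - Finsupp.single i 1 : ℕ →₀ ℕ) j + Finsupp.single i 1 j = R j := by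
    intro j
    rw [Finsupp.tsub_apply]
    rcases eq_or_ne j i with rfl | h
    · rw [Finsupp.single_eq_same]; omega
    · rw [Finsupp.single_eq_of_ne' (Ne.symm h)]; omega
  have : cum R n = ∑ j ∈ Finset.range n,
      ((R - Finsupp.single i 1 : ℕ →₀ ℕ) j + Finsupp.single i 1 j) := by
    unfold cum; exact Finset.sum_congr rfl fun j _ => (hpt j).symm
  rw [this, Finset.sum_add_distrib]
  congr 1
  simp only [Finsupp.single_apply]
  rw [Finset.sum_ite_eq (Finset.range n) i (fun _ => 1)]
  simp [Finset.mem_range]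

lemma sum_sub_single (hi : 1 ≤ R i) :
    ((R - Finsupp.single i 1).sum fun _ a => a) + 1 = R.sum fun _ a => a := by
  set N := max ((R - Finsupp.single i 1).support.sup id + 1)
    (max (R.support.sup id + 1) (i + 1)) with hN
  have h1 : cum (R - Finsupp.single i 1) N = (R - Finsupp.single i 1).sum fun _ a => a :=
    cum_eq_sum _ (by omega)
  have h2 : cum R N = R.sum fun _ a => a := cum_eq_sum _ (by omega)
  have h3 := cum_sub_single hi N
  rw [if_pos (by omega)] at h3
  omega

lemma cum_add_single (n : ℕ) :
    cum (R + Finsupp.single i 1) n = cum R n + (if i < n then 1 else 0) := by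
  have hi' : 1 ≤ (R + Finsupp.single i 1 : ℕ →₀ ℕ) i := by
    simp [Finsupp.add_apply]
  have h := cum_sub_single hi' n
  rw [add_tsub_cancel_right] at h
  omega

lemma sum_add_single :
    ((R + Finsupp.single i 1).sum fun _ a => a) = (R.sum fun _ a => a) + 1 := by
  have hi' : 1 ≤ (R + Finsupp.single i 1 : ℕ →₀ ℕ) i := by simp [Finsupp.add_apply]
  have := sum_sub_single hi'
  rw [add_tsub_cancel_right] at this
  omega

lemma boxLabel_at (hi : 1 ≤ R i) (hbig : cum R (i + 1) ≤ R.sum fun _ a => a) :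
    boxLabel R (cum R (i + 1) - 1) = i := by
  have hs := cum_succ R i
  have h1 : 1 ≤ cum R (i + 1) := by omega
  exact boxLabel_eq R (by omega) (by omega) (by omega)

lemma boxLabel_del_lt (hi : 1 ≤ R i) {b : ℕ} (hb : b < cum R (i + 1) - 1) :
    boxLabel (R - Finsupp.single i 1) b = boxLabel R b := by
  have hble : cum R (i + 1) ≤ R.sum fun _ a => a := cum_le_sum R _
  have hbsum : b < R.sum fun _ a => a := by omega
  obtain ⟨s1, s2⟩ := boxLabel_spec R hbsum
  set k := boxLabel R b with hk
  have hki : k ≤ i := by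
    by_contra h
    push_neg at h
    have := cum_mono R (show i + 1 ≤ k by omega)
    omega
  have hsub := sum_sub_single hi
  refine boxLabel_eq _ (by omega) ?_ ?_
  · have h := cum_sub_single hi k
    rw [if_neg (by omega)] at h
    omega
  · have h := cum_sub_single hi (k + 1)
    rcases eq_or_lt_of_le hki with rfl | hki'
    · rw [if_pos (by omega)] at h
      omega
    · rw [if_neg (by omega)] at h
      omega

lemma boxLabel_del_ge (hi : 1 ≤ R i) {b : ℕ} (hb : cum R (i + 1) - 1 ≤ b)
    (hb2 : b + 1 < R.sum fun _ a => a) :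
    boxLabel (R - Finsupp.single i 1) b = boxLabel R (b + 1) := by
  have h1 : 1 ≤ cum R (i + 1) := by have := cum_succ R i; omega
  obtain ⟨s1, s2⟩ := boxLabel_spec R hb2
  set k := boxLabel R (b + 1) with hk
  have hki : i < k := by
    by_contra h
    push_neg at h
    have := cum_mono R (show k + 1 ≤ i + 1 by omega)
    omega
  have hsub := sum_sub_single hi
  refine boxLabel_eq _ (by omega) ?_ ?_
  · have h := cum_sub_single hi k
    rw [if_pos (by omega)] at h
    omega
  · have h := cum_sub_single hi (k + 1)
    rw [if_pos (by omega)] at h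
    omega

end SUBS
section SPLIT

def eIdx (L b0 : ℕ) (c : Fin (L - 1)) : Fin L :=
  if (c : ℕ) < b0 then ⟨(c : ℕ), by have := c.isLt; omega⟩
  else ⟨(c : ℕ) + 1, by have := c.isLt; omega⟩

lemma eIdx_val (L b0 : ℕ) (c : Fin (L - 1)) :
    (eIdx L b0 c : ℕ) = if (c : ℕ) < b0 then (c : ℕ) else (c : ℕ) + 1 := by
  unfold eIdx
  split <;> rfl

lemma sum_split {M : Type*} [AddCommMonoid M] (L : ℕ) (b0 : ℕ) (hb0 : b0 < L)
    (g : Fin L → M) :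
    ∑ b : Fin L, g b = g ⟨b0, hb0⟩ + ∑ c : Fin (L - 1), g (eIdx L b0 c) := by
  rcases L with _ | n
  · omega
  exact Fin.sum_univ_succAbove g ⟨b0, hb0⟩

lemma majDelete_eq (L : ℕ) (hL : 1 ≤ L) (b0 : ℕ) (f : Fin L → ℕ) (c : Fin (L - 1)) :
    majDelete L hL b0 f c = f (eIdx L b0 c) := by
  unfold majDelete eIdx
  split <;> rfl

end SPLIT

noncomputable def majInsert (L : ℕ) (b0 l : ℕ) (f : Fin (L - 1) → ℕ) : Fin L → ℕ :=
  fun b =>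
    if h : (b : ℕ) < b0 ∧ b0 ≤ L - 1 then f ⟨(b : ℕ), by omega⟩
    else if (b : ℕ) = b0 then l
    else if h2 : b0 < (b : ℕ) then f ⟨(b : ℕ) - 1, by have := b.isLt; omega⟩
    else 0

lemma majInsert_lt (L : ℕ) (b0 l : ℕ) (hb0 : b0 ≤ L - 1) (f : Fin (L - 1) → ℕ)
    (b : Fin L) (hb : (b : ℕ) < b0) :
    majInsert L b0 l f b = f ⟨(b : ℕ), by omega⟩ := by
  unfold majInsert
  rw [dif_pos ⟨hb, hb0⟩]

lemma majInsert_b0 (L : ℕ) (b0 l : ℕ) (f : Fin (L - 1) → ℕ)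
    (b : Fin L) (hb : (b : ℕ) = b0) :
    majInsert L b0 l f b = l := by
  unfold majInsert
  rw [dif_neg (by omega), if_pos hb]

lemma majInsert_gt (L : ℕ) (b0 l : ℕ) (f : Fin (L - 1) → ℕ)
    (b : Fin L) (hb : b0 < (b : ℕ)) :
    majInsert L b0 l f b = f ⟨(b : ℕ) - 1, by have := b.isLt; omega⟩ := by
  unfold majInsert
  rw [dif_neg (by omega), if_neg (by omega), dif_pos hb]

lemma majInsert_eIdx (L : ℕ) (b0 l : ℕ) (hb0 : b0 ≤ L - 1) (f : Fin (L - 1) → ℕ)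
    (c : Fin (L - 1)) : majInsert L b0 l f (eIdx L b0 c) = f c := by
  rcases lt_or_ge (c : ℕ) b0 with h | h
  · have hv : ((eIdx L b0 c : Fin L) : ℕ) = (c : ℕ) := by rw [eIdx_val, if_pos h]
    rw [majInsert_lt L b0 l hb0 f _ (by omega)]
    congr 1
    exact Fin.ext (by simp [hv])
  · have hv : ((eIdx L b0 c : Fin L) : ℕ) = (c : ℕ) + 1 := by rw [eIdx_val, if_neg (by omega)]
    rw [majInsert_gt L b0 l f _ (by omega)]
    congr 1
    exact Fin.ext (by simp [hv])
open MajAux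

noncomputable def majStepInv (L : ℕ) :
    ℕ × ℕ × (ℕ →₀ ℕ) × (Fin (L - 1) → ℕ) → (ℕ →₀ ℕ) × (Fin L → ℕ) × ℕ :=
  fun q => (q.2.2.1 + Finsupp.single (q.1 + q.2.1) 1,
            majInsert L (cum q.2.2.1 (q.1 + q.2.1 + 1)) q.1 q.2.2.2,
            q.1 + q.2.1)

lemma majStep_eq_of (L : ℕ) (hL : 1 ≤ L) (R : ℕ →₀ ℕ) (f : Fin L → ℕ) (i : ℕ)
    (hb0 : cum R (i + 1) - 1 < L) :
    majStep L hL (R, f, i) =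
      (f ⟨cum R (i + 1) - 1, hb0⟩,
       i - f ⟨cum R (i + 1) - 1, hb0⟩,
       R - Finsupp.single i 1,
       majDelete L hL (cum R (i + 1) - 1) f) := by
  have hmin : min (cum R (i + 1) - 1) (L - 1) = cum R (i + 1) - 1 :=
    min_eq_left (by omega)
  show (f ⟨min (cum R (i + 1) - 1) (L - 1), _⟩, _, _, _) = _
  simp only [show (∑ x ∈ Finset.range (i + 1), R x) = cum R (i + 1) from rfl, hmin]

section Main

variable {L : ℕ} (hL : 1 ≤ L) (S : ℕ →₀ ℕ)

lemma mapsTo_majStep : Set.MapsTo (majStep L hL) (T1 L S) (T2 L S) := by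
  rintro ⟨R, f, i⟩ ⟨hsum, hRi, hcount, hbound⟩
  dsimp only at hsum hRi hcount hbound
  have hcs := cum_succ R i
  have hB1 : 1 ≤ cum R (i + 1) := by omega
  have hBle : cum R (i + 1) ≤ L := by
    have := cum_le_sum R (i + 1); omega
  have hb0 : cum R (i + 1) - 1 < L := by omega
  rw [majStep_eq_of L hL R f i hb0]
  set b0 := cum R (i + 1) - 1 with hb0def
  set l := f ⟨b0, hb0⟩ with hldef
  have hSl : 1 ≤ S l := by
    rw [← hcount l]
    exact Finset.card_pos.2 ⟨⟨b0, hb0⟩, Finset.mem_filter.2 ⟨Finset.mem_univ _, rfl⟩⟩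
  have hsum' : ((R - Finsupp.single i 1).sum fun _ a => a) = L - 1 := by
    have := sum_sub_single hRi; omega
  refine ⟨hSl, hsum', ?_, ?_⟩
  · -- counts
    intro m
    show (Finset.univ.filter fun c : Fin (L - 1) => majDelete L hL b0 f c = m).card
      = (S - Finsupp.single l 1 : ℕ →₀ ℕ) m
    have hsplit : S m = (if l = m then 1 else 0) +
        (Finset.univ.filter fun c : Fin (L - 1) => majDelete L hL b0 f c = m).card := by
      rw [← hcount m, Finset.card_filter, Finset.card_filter,
        sum_split L b0 hb0 (fun b => if f b = m then 1 else 0)]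
      congr 1
      exact Finset.sum_congr rfl fun c _ => by rw [majDelete_eq]
    rw [Finsupp.tsub_apply, Finsupp.single_apply]
    by_cases hm : l = m
    · simp only [hm, if_true, eq_self_iff_true] at hsplit ⊢
      omega
    · simp only [hm, if_false] at hsplit ⊢
      omega
  · -- majorization bound
    intro c
    show majDelete L hL b0 f c ≤ boxLabel (R - Finsupp.single i 1) (c : ℕ)
    have hcl := c.isLt
    rw [majDelete_eq]
    rcases lt_or_ge (c : ℕ) b0 with h | h
    · have hv : ((eIdx L b0 c) : ℕ) = (c : ℕ) := by rw [eIdx_val, if_pos h]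
      have hb := hbound (eIdx L b0 c)
      rw [hv] at hb
      rwa [boxLabel_del_lt hRi (by omega)]
    · have hv : ((eIdx L b0 c) : ℕ) = (c : ℕ) + 1 := by rw [eIdx_val, if_neg (by omega)]
      have hb := hbound (eIdx L b0 c)
      rw [hv] at hb
      rwa [boxLabel_del_ge hRi (by omega) (by omega)]

lemma mapsTo_majStepInv : 1 ≤ L → Set.MapsTo (majStepInv L) (T2 L S) (T1 L S) := by
  intro hL
  rintro ⟨l, j, R', f'⟩ ⟨hSl, hsum', hcount', hbound'⟩
  dsimp only at hSl hsum' hcount' hbound'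
  set i := l + j with hidef
  set R : ℕ →₀ ℕ := R' + Finsupp.single i 1 with hRdef
  set b0 := cum R' (i + 1) with hb0def
  have hb0le : b0 ≤ L - 1 := by
    have := cum_le_sum R' (i + 1); omega
  have hb0 : b0 < L := by omega
  have hRsum : (R.sum fun _ a => a) = L := by
    rw [hRdef, sum_add_single]; omega
  have hRi : 1 ≤ R i := by
    rw [hRdef]
    simp [Finsupp.add_apply]
  have hRsub : R - Finsupp.single i 1 = R' := by
    rw [hRdef]; exact add_tsub_cancel_right _ _
  have hcumR : cum R (i + 1) = b0 + 1 := by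
    rw [hRdef, cum_add_single, if_pos (Nat.lt_succ_self i)]
  set f : Fin L → ℕ := majInsert L b0 l f' with hfdef
  have hfb0 : ∀ b : Fin L, (b : ℕ) = b0 → f b = l := fun b hb =>
    majInsert_b0 L b0 l f' b hb
  refine ⟨?_, hRi, ?_, ?_⟩
  · exact hRsum
  · -- counts
    intro m
    show (Finset.univ.filter fun b : Fin L => f b = m).card = S m
    have hsplit : (Finset.univ.filter fun b : Fin L => f b = m).card
        = (if l = m then 1 else 0) +
          (Finset.univ.filter fun c : Fin (L - 1) => f' c = m).card := by
      rw [Finset.card_filter, Finset.card_filter,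
        sum_split L b0 hb0 (fun b => if f b = m then 1 else 0)]
      congr 1
      · rw [hfb0 ⟨b0, hb0⟩ rfl]
      · exact Finset.sum_congr rfl fun c _ => by
          rw [hfdef, majInsert_eIdx L b0 l hb0le f' c]
    have h3 := hcount' m
    rw [Finsupp.tsub_apply, Finsupp.single_apply] at h3
    by_cases hm : l = m
    · subst hm
      simp only [eq_self_iff_true, if_true] at hsplit h3
      omega
    · simp only [hm, if_false] at hsplit h3
      omega
  · -- bound
    intro b
    show f b ≤ boxLabel R (b : ℕ)
    have hbl := b.isLt
    rcases lt_trichotomy (b : ℕ) b0 with h | h | h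
    · rw [hfdef, majInsert_lt L b0 l hb0le f' b h]
      have hb := hbound' ⟨(b : ℕ), by omega⟩
      have hlab : boxLabel (R - Finsupp.single i 1) (b : ℕ) = boxLabel R (b : ℕ) :=
        boxLabel_del_lt hRi (by omega)
      rw [hRsub] at hlab
      rw [← hlab]
      exact hb
    · rw [hfb0 b h, h]
      have hat : boxLabel R (cum R (i + 1) - 1) = i :=
        boxLabel_at hRi (cum_le_sum R (i + 1))
      have hbb : b0 = cum R (i + 1) - 1 := by omega
      rw [hbb, hat]
      omega
    · rw [hfdef, majInsert_gt L b0 l f' b h]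
      have hb := hbound' ⟨(b : ℕ) - 1, by omega⟩
      have hlab : boxLabel (R - Finsupp.single i 1) ((b : ℕ) - 1)
          = boxLabel R (((b : ℕ) - 1) + 1) :=
        boxLabel_del_ge hRi (by omega) (by omega)
      rw [hRsub] at hlab
      rw [show ((b : ℕ) - 1) + 1 = (b : ℕ) by omega] at hlab
      rw [← hlab]
      exact hb

lemma leftInv_majStep : Set.LeftInvOn (majStepInv L) (majStep L hL) (T1 L S) := by
  rintro ⟨R, f, i⟩ ⟨hsum, hRi, hcount, hbound⟩
  dsimp only at hsum hRi hcount hbound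
  have hcs := cum_succ R i
  have hBle : cum R (i + 1) ≤ L := by have := cum_le_sum R (i + 1); omega
  have hb0 : cum R (i + 1) - 1 < L := by omega
  have hat : boxLabel R (cum R (i + 1) - 1) = i := boxLabel_at hRi (cum_le_sum R (i + 1))
  have hli : f ⟨cum R (i + 1) - 1, hb0⟩ ≤ i := by
    have h := hbound ⟨cum R (i + 1) - 1, hb0⟩
    rwa [show ((⟨cum R (i + 1) - 1, hb0⟩ : Fin L) : ℕ) = cum R (i + 1) - 1 from rfl,
      hat] at h
  show majStepInv L (majStep L hL (R, f, i)) = (R, f, i)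
  rw [majStep_eq_of L hL R f i hb0]
  set b0 := cum R (i + 1) - 1 with hb0def
  set l := f ⟨b0, hb0⟩ with hldef
  have hb0le : b0 ≤ L - 1 := by omega
  have hadd : l + (i - l) = i := by omega
  show ((R - Finsupp.single i 1 : ℕ →₀ ℕ) + Finsupp.single (l + (i - l)) 1,
      majInsert L (cum (R - Finsupp.single i 1) (l + (i - l) + 1)) l
        (majDelete L hL b0 f), l + (i - l)) = (R, f, i)
  rw [hadd]
  have hcum' : cum (R - Finsupp.single i 1) (i + 1) = b0 := by
    have := cum_sub_single hRi (i + 1)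
    rw [if_pos (Nat.lt_succ_self i)] at this
    omega
  rw [hcum']
  simp only [Prod.mk.injEq]
  refine ⟨?_, ?_, trivial⟩
  · exact tsub_add_cancel_of_le (Finsupp.single_le_iff.2 hRi)
  · funext b
    rcases lt_trichotomy (b : ℕ) b0 with h | h | h
    · rw [majInsert_lt L b0 l hb0le _ b h, majDelete_eq]
      congr 1
      apply Fin.ext
      rw [eIdx_val]
      show (if (b : ℕ) < b0 then (b : ℕ) else (b : ℕ) + 1) = (b : ℕ)
      rw [if_pos h]
    · rw [majInsert_b0 L b0 l _ b h, hldef]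
      congr 1
      exact (Fin.ext h).symm
    · rw [majInsert_gt L b0 l _ b h, majDelete_eq]
      congr 1
      apply Fin.ext
      rw [eIdx_val]
      show (if (b : ℕ) - 1 < b0 then (b : ℕ) - 1 else (b : ℕ) - 1 + 1) = (b : ℕ)
      rw [if_neg (by omega)]
      omega

lemma rightInv_majStep : Set.RightInvOn (majStepInv L) (majStep L hL) (T2 L S) := by
  rintro ⟨l, j, R', f'⟩ ⟨hSl, hsum', hcount', hbound'⟩
  dsimp only at hSl hsum' hcount' hbound'
  have hb0le : cum R' (l + j + 1) ≤ L - 1 := by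
    have := cum_le_sum R' (l + j + 1); omega
  have hRi : 1 ≤ (R' + Finsupp.single (l + j) 1 : ℕ →₀ ℕ) (l + j) := by
    simp [Finsupp.add_apply]
  have hcum : cum (R' + Finsupp.single (l + j) 1) (l + j + 1) = cum R' (l + j + 1) + 1 := by
    rw [cum_add_single, if_pos (Nat.lt_succ_self _)]
  have hb0 : cum (R' + Finsupp.single (l + j) 1) (l + j + 1) - 1 < L := by omega
  show majStep L hL (R' + Finsupp.single (l + j) 1,
      majInsert L (cum R' (l + j + 1)) l f', l + j) = (l, j, R', f')
  rw [majStep_eq_of L hL _ _ _ hb0]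
  simp only [hcum, Nat.add_sub_cancel]
  have hF : majInsert L (cum R' (l + j + 1)) l f'
      ⟨cum R' (l + j + 1), by omega⟩ = l := majInsert_b0 _ _ _ _ _ rfl
  simp only [Prod.mk.injEq]
  refine ⟨?_, ?_, ?_, ?_⟩
  · exact hF
  · rw [hF]; omega
  · exact add_tsub_cancel_right _ _
  · funext c
    rw [majDelete_eq, majInsert_eIdx L _ l hb0le f' c]

lemma bijOn_majStep : Set.BijOn (majStep L hL) (T1 L S) (T2 L S) :=
  Set.InvOn.bijOn ⟨leftInv_majStep hL S, rightInv_majStep hL S⟩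
    (mapsTo_majStep hL S) (mapsTo_majStepInv S hL)

end Main

/-- for `L ≥ 1` and `S ∈ Seq(L)`, the map
`(R, σ, i) ↦ (ℓ, i − ℓ, R − 1_i, σ∖i)` is a bijection from `T1` onto `T2`,
and it satisfies `ind(σ) = ind(σ∖i)` when `ℓ = i` and
`ind(σ) = ind(σ∖i) + p^ℓ·e_{i−ℓ}` when `ℓ < i`. -/
theorem maj_bijection (p L : ℕ) (hp : p.Prime) (hL : 1 ≤ L) (S : ℕ →₀ ℕ)
    (hS : S.sum (fun _ a => a) = L) :
    Set.BijOn (majStep L hL) (T1 L S) (T2 L S) ∧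
      ∀ q ∈ T1 L S,
        ((majStep L hL q).1 = q.2.2 →
          ind p L q.1 q.2.1 =
            ind p (L - 1) (majStep L hL q).2.2.1 (majStep L hL q).2.2.2) ∧
        ((majStep L hL q).1 < q.2.2 →
          ind p L q.1 q.2.1 =
            ind p (L - 1) (majStep L hL q).2.2.1 (majStep L hL q).2.2.2 +
              Finsupp.single (q.2.2 - (majStep L hL q).1)
                ((p : ℤ) ^ (majStep L hL q).1)) := by
  refine ⟨bijOn_majStep hL S, ?_⟩
  rintro ⟨R, f, i⟩ ⟨hsum, hRi, hcount, hbound⟩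
  dsimp only at hsum hRi hcount hbound
  have hcs := cum_succ R i
  have hBle : cum R (i + 1) ≤ L := by have := cum_le_sum R (i + 1); omega
  have hb0 : cum R (i + 1) - 1 < L := by omega
  have hat : boxLabel R (cum R (i + 1) - 1) = i := boxLabel_at hRi (cum_le_sum R (i + 1))
  rw [majStep_eq_of L hL R f i hb0]
  set b0 := cum R (i + 1) - 1 with hb0def
  set l := f ⟨b0, hb0⟩ with hldef
  dsimp only
  have hmain : ind p L R f =
      (if l = i then 0 else Finsupp.single (i - l) ((p : ℤ) ^ l)) +
        ind p (L - 1) (R - Finsupp.single i 1) (majDelete L hL b0 f) := by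
    rw [ind, ind, sum_split L b0 hb0
      (fun b => if f b = boxLabel R (b : ℕ) then 0
        else Finsupp.single (boxLabel R (b : ℕ) - f b) ((p : ℤ) ^ f b))]
    congr 1
    · show (if f ⟨b0, hb0⟩ = boxLabel R b0 then (0 : ℕ →₀ ℤ)
          else Finsupp.single (boxLabel R b0 - f ⟨b0, hb0⟩) ((p : ℤ) ^ f ⟨b0, hb0⟩)) = _
      rw [show boxLabel R b0 = i from hat]
    · apply Finset.sum_congr rfl
      intro c _
      have hcl := c.isLt
      rw [majDelete_eq]
      have hlab : boxLabel (R - Finsupp.single i 1) (c : ℕ)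
          = boxLabel R ((eIdx L b0 c : Fin L) : ℕ) := by
        rcases lt_or_ge (c : ℕ) b0 with h | h
        · rw [show ((eIdx L b0 c : Fin L) : ℕ) = (c : ℕ) from by rw [eIdx_val, if_pos h]]
          exact boxLabel_del_lt hRi (by omega)
        · rw [show ((eIdx L b0 c : Fin L) : ℕ) = (c : ℕ) + 1 from by
            rw [eIdx_val, if_neg (by omega)]]
          exact boxLabel_del_ge hRi (by omega) (by omega)
      rw [hlab]
  constructor
  · intro h
    rw [hmain, if_pos h, zero_add]
  · intro h
    rw [hmain, if_neg (by omega), add_comm]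
end
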